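/- arXiv:math/0107053 — 2 statements merged into one kernel-verified Lean document; each statement's English description precedes it below -/
import Mathlib

section
/- Fix $k \ge 1$. With $\chi^{(N)}$ defined by $\chi^{(0)}_{i,l} = \delta_{i,0}\delta_{l,0}$ and $\chi^{(N+1)}(q,z_1,z_2) = M(q,z_1,z_2)\chi^{(N)}(q,z_1,qz_2)$, for every $n \ge 0$ and all $N, N' \ge n$ one has $\chi^{(N)} \equiv \chi^{(N')} \pmod {q^n}$; consequently the limit $\chi = \lim_{N \to \infty} \chi^{(N)}$ exists in $(\mathbb{C}[[q]][z_1,z_2])^m$ (coefficientwise in powers of $q$), and this limit satisfies the difference equation $\chi(q,z_1,z_2) = M(q,z_1,z_2)\chi(q,z_1,qz_2)$ with $\chi_{i,l}(q,z_1,0)=\delta_{i,0}\delta_{l,0}$. -/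
open MvPowerSeries

namespace DiffEqn

/-- Index set: pairs `(i,l)` with `0 ≤ i ≤ l ≤ k`. -/
abbrev PairIdx (k : ℕ) := {p : Fin (k + 1) × Fin (k + 1) // p.1 ≤ p.2}

/-- Formal power series in `q = X 0`, `z₁ = X 1`, `z₂ = X 2` over `ℂ`. -/
abbrev R := MvPowerSeries (Fin 3) ℂ

/-- The entry `M_{i,l}^{i',l'}` of `M(q,z₁,z₂)` (inequalities written additively
to avoid truncated subtraction). -/
noncomputable def Ment (k i l i' l' : ℕ) : R :=
  if l ≤ i' + i ∧ i' ≤ l' ∧ l' + i ≤ k then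
    ((X 0 : R) * X 1 * X 2) ^ (l' - i') * (X 2 : R) ^ i
  else if i' + i < l ∧ l ≤ l' + i ∧ l' + i ≤ k then
    ((X 0 : R) * X 1 * X 2) ^ (l' + i - l) * (X 2 : R) ^ i
  else 0

/-- The shift `S : f(q,z₁,z₂) ↦ f(q,z₁,qz₂)`, defined on coefficients:
the coefficient of `q^α z₁^β z₂^γ` in `S f` is that of `q^{α-γ} z₁^β z₂^γ` in `f`. -/
noncomputable def S (f : R) : R := fun d =>
  if d 2 ≤ d 0 then MvPowerSeries.coeff (d.update 0 (d 0 - d 2)) f else 0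

end DiffEqn

/-!
The coefficient of `q^α z₁^β z₂^γ` in `f(q,z₁,qz₂)` is that of `q^{α-γ} z₁^β z₂^γ` in `f`, and
multiplying by `M` only mixes in coefficients with smaller exponents. Hence if `f` and `g` agree
below `q`-degree `n` and at `z₂ = 0`, then `M f(q,z₁,qz₂)` and `M g(q,z₁,qz₂)` agree below
`q`-degree `n + 1` and at `z₂ = 0`. Starting from `M(q,z₁,0) χ^{(0)} = χ^{(0)}`, induction gives
`χ^{(N+1)} ≡ χ^{(N)}` below `q`-degree `N`. The limit is defined coefficientwise, and the same
propagation shows that it solves the difference equation.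
-/

namespace MvPowerSeries

variable {σ A : Type*} [CommSemiring A]

theorem eqOn_coeff_mul_left {s : Set (σ →₀ ℕ)} (hs : IsLowerSet s) {f g : MvPowerSeries σ A}
    (h : s.EqOn (coeff · f) (coeff · g)) (φ : MvPowerSeries σ A) :
    s.EqOn (coeff · (φ * f)) (coeff · (φ * g)) := by
  classical
  intro d hd
  simp only [coeff_mul]
  exact Finset.sum_congr rfl fun x hx =>
    congrArg _ (h (hs (Finset.HasAntidiagonal.antidiagonal.snd_le hx) hd))

theorem finite_support_mul {f g : MvPowerSeries σ A}
    (hf : {d | coeff d f ≠ 0}.Finite) (hg : {d | coeff d g ≠ 0}.Finite) :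
    {d | coeff d (f * g) ≠ 0}.Finite := by
  classical
  refine (hf.image2 (· + ·) hg).subset fun d hd => ?_
  rw [Set.mem_ofPred_eq, coeff_mul] at hd
  obtain ⟨⟨a, b⟩, hab, hne⟩ := Finset.exists_ne_zero_of_sum_ne_zero hd
  exact ⟨a, left_ne_zero_of_mul hne, b, right_ne_zero_of_mul hne,
    Finset.HasAntidiagonal.mem_antidiagonal.1 hab⟩

theorem finite_support_sum {ι : Type*} (t : Finset ι) {f : ι → MvPowerSeries σ A}
    (hf : ∀ i ∈ t, {d | coeff d (f i) ≠ 0}.Finite) :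
    {d | coeff d (∑ i ∈ t, f i) ≠ 0}.Finite := by
  refine (t.finite_toSet.biUnion hf).subset fun d hd => ?_
  rw [Set.mem_ofPred_eq, map_sum] at hd
  obtain ⟨i, hi, hne⟩ := Finset.exists_ne_zero_of_sum_ne_zero hd
  exact Set.mem_biUnion hi hne

theorem finite_support_X_pow (j : σ) (n : ℕ) :
    {d | coeff d (X j ^ n : MvPowerSeries σ A) ≠ 0}.Finite := by
  classical
  refine (Set.finite_singleton (Finsupp.single j n)).subset fun d hd => ?_
  by_contra hne
  exact hd (by rw [coeff_X_pow, if_neg (by simpa using hne)])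

end MvPowerSeries

namespace DiffEqn

lemma coeff_S (f : R) (d : Fin 3 →₀ ℕ) :
    coeff d (S f) = if d 2 ≤ d 0 then coeff (d.update 0 (d 0 - d 2)) f else 0 := rfl

lemma S_zero : S 0 = 0 := by
  ext d
  simp [coeff_S]

lemma S_one : S 1 = 1 := by
  ext d
  simp only [coeff_S, coeff_one, Finsupp.ext_iff, Fin.forall_fin_succ, Finsupp.update_apply]
  split_ifs <;> simp_all
  omega

lemma finite_support_S {f : R} (hf : {d | coeff d f ≠ 0}.Finite) :
    {d | coeff d (S f) ≠ 0}.Finite := by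
  refine (hf.image fun e => e.update 0 (e 0 + e 2)).subset fun d hd => ?_
  simp only [Set.mem_ofPred_eq, coeff_S] at hd
  split_ifs at hd with hle
  · refine ⟨_, hd, ?_⟩
    ext j
    fin_cases j <;> simp [Finsupp.update_apply]
    omega
  · exact absurd rfl hd

lemma finite_support_Ment (k i l i' l' : ℕ) : {d | coeff d (Ment k i l i' l') ≠ 0}.Finite := by
  have monomial_finite (a b : ℕ) :
      {d | coeff d ((X 0 * X 1 * X 2 : R) ^ a * X 2 ^ b) ≠ 0}.Finite := by
    simp only [mul_pow]
    exact finite_support_mul (finite_support_mul (finite_support_mul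
      (finite_support_X_pow _ _) (finite_support_X_pow _ _)) (finite_support_X_pow _ _))
      (finite_support_X_pow _ _)
  unfold Ment
  split_ifs
  · exact monomial_finite _ _
  · exact monomial_finite _ _
  · simp

lemma Ment_zero_zero (k i l : ℕ) : Ment k i l 0 0 = if l ≤ i ∧ i ≤ k then X 2 ^ i else 0 := by
  unfold Ment
  split_ifs <;> simp_all

/-- The iterates `χ^{(N)}` and `χ^{(N+1)}` agree on the coefficients indexed by `lowExponents N`. -/
def lowExponents (n : ℕ) : Set (Fin 3 →₀ ℕ) := {d | d 0 < n ∨ d 2 = 0}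

lemma isLowerSet_lowExponents (n : ℕ) : IsLowerSet (lowExponents n) := by
  intro d e hed hd
  have h0 := hed 0
  have h2 := hed 2
  simp only [lowExponents, Set.mem_ofPred_eq] at hd ⊢
  omega

lemma lowExponents_mono : Monotone lowExponents := by
  intro m n hmn d hd
  simp only [lowExponents, Set.mem_ofPred_eq] at hd ⊢
  omega

/-- `S` lowers the `q`-degree of a coefficient by its `z₂`-degree, so by at least one
unless the coefficient is `z₂`-free. -/
lemma eqOn_coeff_S {n : ℕ} {f g : R} (h : (lowExponents n).EqOn (coeff · f) (coeff · g)) :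
    (lowExponents (n + 1)).EqOn (coeff · (S f)) (coeff · (S g)) := by
  intro d hd
  simp only [coeff_S]
  split_ifs with hle
  · apply h
    simp only [lowExponents, Set.mem_ofPred_eq, Finsupp.update_apply, Fin.reduceEq, if_true,
      if_false] at hd ⊢
    omega
  · rfl

/-- `f ↦ M(q,z₁,z₂) f(q,z₁,qz₂)`, so that `χ^{(N+1)} = step k χ^{(N)}`. -/
noncomputable def step (k : ℕ) (f : PairIdx k → R) (p : PairIdx k) : R :=
  ∑ p' : PairIdx k, Ment k p.1.1 p.1.2 p'.1.1 p'.1.2 * S (f p')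

noncomputable def initial (k : ℕ) (p : PairIdx k) : R :=
  if (p.1.1 : ℕ) = 0 ∧ (p.1.2 : ℕ) = 0 then 1 else 0

lemma eqOn_step {k n : ℕ} {f g : PairIdx k → R}
    (h : ∀ p, (lowExponents n).EqOn (coeff · (f p)) (coeff · (g p))) (p : PairIdx k) :
    (lowExponents (n + 1)).EqOn (coeff · (step k f p)) (coeff · (step k g p)) := by
  intro d hd
  simp only [step, map_sum]
  exact Finset.sum_congr rfl fun p' _ =>
    eqOn_coeff_mul_left (isLowerSet_lowExponents _) (eqOn_coeff_S (h p')) _ hd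

lemma step_initial (k : ℕ) (p : PairIdx k) : step k (initial k) p = Ment k p.1.1 p.1.2 0 0 := by
  have hinitial : ∀ p' : PairIdx k, initial k p' = if p' = ⟨0, le_rfl⟩ then 1 else 0 := by
    intro p'
    simp only [initial, Subtype.ext_iff, Prod.ext_iff, Fin.ext_iff]
    rfl
  simp only [step, hinitial, apply_ite S, S_one, S_zero, mul_ite, mul_one, mul_zero,
    Finset.sum_ite_eq', Finset.mem_univ, if_true]
  rfl

lemma coeff_initial (k : ℕ) (p : PairIdx k) (d : Fin 3 →₀ ℕ) :
    coeff d (initial k p) = if (p.1.1 : ℕ) = 0 ∧ (p.1.2 : ℕ) = 0 ∧ d = 0 then 1 else 0 := by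
  simp only [initial]
  split_ifs <;> simp_all [coeff_one]

lemma eqOn_step_initial (k : ℕ) (p : PairIdx k) :
    (lowExponents 0).EqOn (coeff · (step k (initial k) p)) (coeff · (initial k p)) := by
  intro d hd
  replace hd : d 2 = 0 := by simpa [lowExponents] using hd
  simp only [step_initial, Ment_zero_zero, initial]
  split_ifs with hM hI hI
  · rw [hI.1, pow_zero]
  · rw [coeff_X_pow, if_neg, map_zero]
    intro hd_single
    have := congrArg (· 2) hd_single
    simp only [Finsupp.single_eq_same] at this
    omega
  · omega
  · rfl

noncomputable def iter (k N : ℕ) : PairIdx k → R := (step k)^[N] (initial k)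

lemma iter_zero (k : ℕ) : iter k 0 = initial k := rfl

lemma iter_succ (k N : ℕ) : iter k (N + 1) = step k (iter k N) :=
  Function.iterate_succ_apply' _ _ _

lemma eqOn_iter_succ (k N : ℕ) (p : PairIdx k) :
    (lowExponents N).EqOn (coeff · (iter k (N + 1) p)) (coeff · (iter k N p)) := by
  induction N generalizing p with
  | zero => exact eqOn_step_initial k p
  | succ N ih => rw [iter_succ k (N + 1), congrFun (iter_succ k N) p]; exact eqOn_step ih p

lemma eqOn_iter_of_le (k : ℕ) {N N' : ℕ} (h : N ≤ N') (p : PairIdx k) :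
    (lowExponents N).EqOn (coeff · (iter k N' p)) (coeff · (iter k N p)) := by
  induction N', h using Nat.le_induction with
  | base => exact Set.eqOn_refl _ _
  | succ N' hN' ih => exact ((eqOn_iter_succ k N' p).mono (lowExponents_mono hN')).trans ih

lemma eqOn_iter (k N N' : ℕ) (p : PairIdx k) :
    (lowExponents (min N N')).EqOn (coeff · (iter k N p)) (coeff · (iter k N' p)) := by
  rcases le_total N N' with h | h
  · rw [min_eq_left h]; exact (eqOn_iter_of_le k h p).symm
  · rw [min_eq_right h]; exact eqOn_iter_of_le k h p

lemma finite_support_iter (k N : ℕ) (p : PairIdx k) :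
    {d | coeff d (iter k N p) ≠ 0}.Finite := by
  induction N generalizing p with
  | zero =>
    refine (Set.finite_singleton 0).subset fun d hd => ?_
    rw [Set.mem_ofPred_eq, iter_zero, coeff_initial] at hd
    simp_all
  | succ N ih =>
    rw [iter_succ]
    exact finite_support_sum _ fun p' _ => finite_support_mul (finite_support_Ment _ _ _ _ _)
      (finite_support_S (ih p'))

noncomputable def limit (k : ℕ) (p : PairIdx k) : R := fun d => coeff d (iter k (d 0 + 1) p)

lemma eqOn_limit (k N : ℕ) (p : PairIdx k) :
    (lowExponents N).EqOn (coeff · (limit k p)) (coeff · (iter k N p)) := by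
  intro d hd
  apply eqOn_iter
  simp only [lowExponents, Set.mem_ofPred_eq] at hd ⊢
  omega

lemma step_limit (k : ℕ) : step k (limit k) = limit k := by
  funext p
  ext d
  have hd : d ∈ lowExponents (d 0 + 1) := Or.inl (Nat.lt_succ_self _)
  calc coeff d (step k (limit k) p) = coeff d (step k (iter k (d 0)) p) :=
        eqOn_step (eqOn_limit k (d 0)) p hd
    _ = coeff d (limit k p) := by rw [← iter_succ]; rfl

lemma iter_eq_of_recursion {k : ℕ} {χ : ℕ → PairIdx k → R} (h0 : χ 0 = initial k)
    (hrec : ∀ N, χ (N + 1) = step k (χ N)) (N : ℕ) : χ N = iter k N := by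
  induction N with
  | zero => rw [h0, iter_zero]
  | succ N ih => rw [hrec, ih, iter_succ]

theorem iterates_converge_general (k : ℕ)
    (χ : ℕ → PairIdx k → R)
    (h0 : ∀ p, χ 0 p = if (p.1.1 : ℕ) = 0 ∧ (p.1.2 : ℕ) = 0 then 1 else 0)
    (hrec : ∀ N p, χ (N + 1) p =
      ∑ p' : PairIdx k,
        Ment k (p.1.1 : ℕ) (p.1.2 : ℕ) (p'.1.1 : ℕ) (p'.1.2 : ℕ) * S (χ N p')) :
    (∀ n N N', n ≤ N → n ≤ N' → ∀ p (d : Fin 3 →₀ ℕ), d 0 < n →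
      MvPowerSeries.coeff d (χ N p) = MvPowerSeries.coeff d (χ N' p)) ∧
    ∃ χlim : PairIdx k → R,
      (∀ n N, n ≤ N → ∀ p (d : Fin 3 →₀ ℕ), d 0 < n →
        MvPowerSeries.coeff d (χlim p) = MvPowerSeries.coeff d (χ N p)) ∧
      (∀ (p : PairIdx k) (n : ℕ),
        {d : Fin 3 →₀ ℕ | d 0 = n ∧ MvPowerSeries.coeff d (χlim p) ≠ 0}.Finite) ∧
      (∀ p : PairIdx k, χlim p =
        ∑ p' : PairIdx k,
          Ment k (p.1.1 : ℕ) (p.1.2 : ℕ) (p'.1.1 : ℕ) (p'.1.2 : ℕ) * S (χlim p')) ∧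
      (∀ (p : PairIdx k) (d : Fin 3 →₀ ℕ), d 2 = 0 →
        MvPowerSeries.coeff d (χlim p) =
          if (p.1.1 : ℕ) = 0 ∧ (p.1.2 : ℕ) = 0 ∧ d = 0 then 1 else 0) := by
  obtain rfl : χ = iter k := funext <| iter_eq_of_recursion (funext h0) fun N => funext (hrec N)
  have low_of_lt {n N : ℕ} {d : Fin 3 →₀ ℕ} (hn : n ≤ N) (hd : d 0 < n) : d ∈ lowExponents N :=
    Or.inl (hd.trans_le hn)
  refine ⟨fun n N N' hN hN' p d hd => eqOn_iter k N N' p (low_of_lt (le_min hN hN') hd),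
    limit k, fun n N hN p d hd => eqOn_limit k N p (low_of_lt hN hd), fun p n => ?_,
    fun p => (congrFun (step_limit k) p).symm, fun p d hd => ?_⟩
  · refine (finite_support_iter k (n + 1) p).subset fun d ⟨hdn, hne⟩ h => hne ?_
    exact (eqOn_limit k (n + 1) p (low_of_lt le_rfl (by omega))).trans h
  · exact (eqOn_limit k 0 p (Or.inr hd)).trans (coeff_initial k p d)

/-- The iterates `χ^{(N)}` (with `χ^{(0)}_{i,l} = δ_{i,0}δ_{l,0}` and
`χ^{(N+1)}(q,z₁,z₂) = M(q,z₁,z₂)χ^{(N)}(q,z₁,qz₂)`) stabilize modulo every power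
of `q`; the limit `χ` exists in `(ℂ[[q]][z₁,z₂])^m` and solves the difference
equation with the initial condition `χ_{i,l}(q,z₁,0) = δ_{i,0}δ_{l,0}`. -/
theorem iterates_converge (k : ℕ) (hk : 1 ≤ k)
    (χ : ℕ → PairIdx k → R)
    (h0 : ∀ p, χ 0 p = if (p.1.1 : ℕ) = 0 ∧ (p.1.2 : ℕ) = 0 then 1 else 0)
    (hrec : ∀ N p, χ (N + 1) p =
      ∑ p' : PairIdx k,
        Ment k (p.1.1 : ℕ) (p.1.2 : ℕ) (p'.1.1 : ℕ) (p'.1.2 : ℕ) * S (χ N p')) :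
    (∀ n N N', n ≤ N → n ≤ N' → ∀ p (d : Fin 3 →₀ ℕ), d 0 < n →
      MvPowerSeries.coeff d (χ N p) = MvPowerSeries.coeff d (χ N' p)) ∧
    ∃ χlim : PairIdx k → R,
      (∀ n N, n ≤ N → ∀ p (d : Fin 3 →₀ ℕ), d 0 < n →
        MvPowerSeries.coeff d (χlim p) = MvPowerSeries.coeff d (χ N p)) ∧
      (∀ (p : PairIdx k) (n : ℕ),
        {d : Fin 3 →₀ ℕ | d 0 = n ∧ MvPowerSeries.coeff d (χlim p) ≠ 0}.Finite) ∧
      (∀ p : PairIdx k, χlim p =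
        ∑ p' : PairIdx k,
          Ment k (p.1.1 : ℕ) (p.1.2 : ℕ) (p'.1.1 : ℕ) (p'.1.2 : ℕ) * S (χlim p')) ∧
      (∀ (p : PairIdx k) (d : Fin 3 →₀ ℕ), d 2 = 0 →
        MvPowerSeries.coeff d (χlim p) =
          if (p.1.1 : ℕ) = 0 ∧ (p.1.2 : ℕ) = 0 ∧ d = 0 then 1 else 0) :=
  iterates_converge_general k χ h0 hrec

end DiffEqn
end

section
/- Fix $k \ge 1$. The unique solution $\chi(q,z_1,z_2)$ of the difference equation $\chi(q,z_1,z_2) = M(q,z_1,z_2)\chi(q,z_1,qz_2)$, $\chi_{i,l}(q,z_1,0) = \delta_{i,0}\delta_{l,0}$, has components which are formal power series in $q$ with coefficients in $\mathbb{Z}_{\ge 0}[z_1,z_2]$ (polynomials in $z_1, z_2$ with non-negative integer coefficients). -/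
open MvPowerSeries

namespace DiffEqn

/-!
Every nonzero entry of `M` is a monomial `(q z₁ z₂)^a z₂^i` with `i ≤ k`. Hence, for `γ > 0`, the
coefficient of `q^α z₁^β z₂^γ` in `χ_p` is a sum of coefficients of the `χ_{p'}` at exponents of
smaller weight `α + γ`, and induction on this weight from the initial condition at `γ = 0` shows
that all coefficients are natural numbers vanishing unless `β ≤ α` and `γ ≤ α + k`; the latter
leaves finitely many monomials for each power of `q`.
-/

noncomputable def expVec (x y z : ℕ) : Fin 3 →₀ ℕ :=
  Finsupp.single 0 x + Finsupp.single 1 y + Finsupp.single 2 z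

@[simp] lemma expVec_zero (x y z : ℕ) : expVec x y z 0 = x := by
  simp [expVec]

@[simp] lemma expVec_one (x y z : ℕ) : expVec x y z 1 = y := by
  simp [expVec]

@[simp] lemma expVec_two (x y z : ℕ) : expVec x y z 2 = z := by
  simp [expVec]

lemma expVec_eta (d : Fin 3 →₀ ℕ) : expVec (d 0) (d 1) (d 2) = d := by
  ext j
  fin_cases j <;> simp

lemma pow_mul_X_two_pow_eq_monomial (a i : ℕ) :
    ((X 0 : R) * X 1 * X 2) ^ a * (X 2 : R) ^ i = monomial (expVec a a (a + i)) 1 := by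
  simp only [mul_pow, X_pow_eq, monomial_mul_monomial, mul_one, expVec, add_assoc,
    ← Finsupp.single_add]

lemma Ment_eq_zero_or_monomial (k i l i' l' : ℕ) :
    Ment k i l i' l' = 0 ∨ ∃ a, Ment k i l i' l' = monomial (expVec a a (a + i)) 1 := by
  unfold Ment
  split_ifs
  · exact Or.inr ⟨l' - i', pow_mul_X_two_pow_eq_monomial _ _⟩
  · exact Or.inr ⟨l' + i - l, pow_mul_X_two_pow_eq_monomial _ _⟩
  · exact Or.inl rfl

/-- Multiplying `S f` by `(q z₁ z₂)^a z₂^i` reads the coefficient at `d` off the coefficient of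
`f` at this exponent. -/
noncomputable def sourceExp (d : Fin 3 →₀ ℕ) (a i : ℕ) : Fin 3 →₀ ℕ :=
  expVec (d 0 + i - d 2) (d 1 - a) (d 2 - (a + i))

lemma coeff_monomial_mul_S (a i : ℕ) (f : R) (d : Fin 3 →₀ ℕ) :
    coeff d (monomial (expVec a a (a + i)) 1 * S f) =
      if a ≤ d 1 ∧ a + i ≤ d 2 ∧ d 2 ≤ d 0 + i then coeff (sourceExp d a i) f else 0 := by
  rw [coeff_monomial_mul]
  by_cases hle : expVec a a (a + i) ≤ d
  · have h0 := hle 0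
    have h1 := hle 1
    have h2 := hle 2
    simp only [expVec_zero, expVec_one, expVec_two] at h0 h1 h2
    simp only [hle, if_true, one_mul]
    change S f _ = _
    unfold S
    simp only [Finsupp.tsub_apply, expVec_zero, expVec_two]
    by_cases hS : d 2 ≤ d 0 + i
    · rw [if_pos (by omega), if_pos ⟨h1, h2, hS⟩]
      congr 2
      ext j
      fin_cases j <;> simp [sourceExp, Finsupp.update_apply]
      omega
    · rw [if_neg (by omega), if_neg (by omega)]
  · rw [if_neg hle, if_neg]
    rintro ⟨h1, h2, h3⟩
    refine hle fun j => ?_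
    fin_cases j <;> simp <;> omega

def CoeffInvariant (k : ℕ) (d : Fin 3 →₀ ℕ) (c : ℂ) : Prop :=
  (∃ n : ℕ, c = n) ∧ (c ≠ 0 → d 1 ≤ d 0 ∧ d 2 ≤ d 0 + k)

namespace CoeffInvariant

variable {k : ℕ} {d : Fin 3 →₀ ℕ}

lemma zero : CoeffInvariant k d 0 :=
  ⟨⟨0, Nat.cast_zero.symm⟩, fun h => absurd rfl h⟩

lemma add {b c : ℂ} (hb : CoeffInvariant k d b) (hc : CoeffInvariant k d c) :
    CoeffInvariant k d (b + c) := by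
  obtain ⟨⟨m, rfl⟩, hb⟩ := hb
  obtain ⟨⟨n, rfl⟩, hc⟩ := hc
  refine ⟨⟨m + n, by push_cast; ring⟩, fun hbc => ?_⟩
  by_cases hm : (m : ℂ) = 0
  · exact hc (by simpa [hm] using hbc)
  · exact hb hm

lemma sum {ι : Type*} (s : Finset ι) (c : ι → ℂ) (h : ∀ j ∈ s, CoeffInvariant k d (c j)) :
    CoeffInvariant k d (∑ j ∈ s, c j) :=
  Finset.sum_induction c _ (fun _ _ => add) zero h

lemma of_sourceExp {a i : ℕ} {c : ℂ} (hik : i ≤ k) (ha : a ≤ d 1) (hai : a + i ≤ d 2)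
    (hd : d 2 ≤ d 0 + i) (hc : CoeffInvariant k (sourceExp d a i) c) :
    CoeffInvariant k d c := by
  refine ⟨hc.1, fun hne => ?_⟩
  have := hc.2 hne
  simp only [sourceExp, expVec_zero, expVec_one, expVec_two] at this
  omega

end CoeffInvariant

section Solution

variable {k : ℕ} {χ : PairIdx k → R}

lemma coeffInvariant_Ment_mul_S
    {p p' : PairIdx k} {d : Fin 3 →₀ ℕ}
    (ih : ∀ e : Fin 3 →₀ ℕ, e 0 + e 2 < d 0 + d 2 → CoeffInvariant k e (coeff e (χ p')))
    (hd : d 2 ≠ 0) :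
    CoeffInvariant k d
      (coeff d (Ment k (p.1.1 : ℕ) (p.1.2 : ℕ) (p'.1.1 : ℕ) (p'.1.2 : ℕ) * S (χ p'))) := by
  rcases Ment_eq_zero_or_monomial k p.1.1 p.1.2 p'.1.1 p'.1.2 with hM | ⟨a, hM⟩
  · rw [hM, zero_mul, map_zero]
    exact CoeffInvariant.zero
  rw [hM, coeff_monomial_mul_S]
  split_ifs with hc
  · obtain ⟨ha, hai, hS⟩ := hc
    refine CoeffInvariant.of_sourceExp (Nat.lt_succ_iff.mp p.1.1.isLt) ha hai hS (ih _ ?_)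
    simp only [sourceExp, expVec_zero, expVec_two]
    omega
  · exact CoeffInvariant.zero

theorem coeffInvariant_solution
    (heq : ∀ p : PairIdx k, χ p =
      ∑ p' : PairIdx k,
        Ment k (p.1.1 : ℕ) (p.1.2 : ℕ) (p'.1.1 : ℕ) (p'.1.2 : ℕ) * S (χ p'))
    (hinit : ∀ (p : PairIdx k) (d : Fin 3 →₀ ℕ), d 2 = 0 →
      coeff d (χ p) = if (p.1.1 : ℕ) = 0 ∧ (p.1.2 : ℕ) = 0 ∧ d = 0 then 1 else 0)
    (d : Fin 3 →₀ ℕ) (p : PairIdx k) : CoeffInvariant k d (coeff d (χ p)) := by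
  induction hw : d 0 + d 2 using Nat.strong_induction_on generalizing d p with
  | _ w ih =>
    by_cases hd : d 2 = 0
    · rw [hinit p d hd]
      split_ifs with h
      · obtain ⟨-, -, rfl⟩ := h
        exact ⟨⟨1, Nat.cast_one.symm⟩, fun _ => by simp⟩
      · exact CoeffInvariant.zero
    rw [heq p, map_sum]
    exact CoeffInvariant.sum _ _ fun p' _ =>
      coeffInvariant_Ment_mul_S (fun e he => ih _ (hw ▸ he) e p' rfl) hd

end Solution

theorem solution_coeff_nonneg_general (k : ℕ)
    (χ : PairIdx k → R)
    (heq : ∀ p : PairIdx k, χ p =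
      ∑ p' : PairIdx k,
        Ment k (p.1.1 : ℕ) (p.1.2 : ℕ) (p'.1.1 : ℕ) (p'.1.2 : ℕ) * S (χ p'))
    (hinit : ∀ (p : PairIdx k) (d : Fin 3 →₀ ℕ), d 2 = 0 →
      MvPowerSeries.coeff d (χ p) =
        if (p.1.1 : ℕ) = 0 ∧ (p.1.2 : ℕ) = 0 ∧ d = 0 then 1 else 0) :
    (∀ (p : PairIdx k) (d : Fin 3 →₀ ℕ),
      ∃ c : ℕ, MvPowerSeries.coeff d (χ p) = (c : ℂ)) ∧
    (∀ (p : PairIdx k) (n : ℕ),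
      {d : Fin 3 →₀ ℕ | d 0 = n ∧ MvPowerSeries.coeff d (χ p) ≠ 0}.Finite) := by
  have hχ := coeffInvariant_solution heq hinit
  refine ⟨fun p d => (hχ d p).1, fun p n => ?_⟩
  refine ((Set.finite_Iic n).prod (Set.finite_Iic (n + k))).image
    (fun yz : ℕ × ℕ => expVec n yz.1 yz.2) |>.subset ?_
  rintro d ⟨rfl, hne⟩
  obtain ⟨hy, hz⟩ := (hχ d p).2 hne
  exact ⟨(d 1, d 2), ⟨hy, hz⟩, expVec_eta d⟩

/-- The components of the unique solution `χ` of the difference equation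
`χ(q,z₁,z₂) = M(q,z₁,z₂)χ(q,z₁,qz₂)`, `χ_{i,l}(q,z₁,0) = δ_{i,0}δ_{l,0}`, are
power series in `q` whose coefficients are polynomials in `z₁,z₂` with
non-negative integer coefficients. -/
theorem solution_coeff_nonneg (k : ℕ) (hk : 1 ≤ k)
    (χ : PairIdx k → R)
    (heq : ∀ p : PairIdx k, χ p =
      ∑ p' : PairIdx k,
        Ment k (p.1.1 : ℕ) (p.1.2 : ℕ) (p'.1.1 : ℕ) (p'.1.2 : ℕ) * S (χ p'))
    (hinit : ∀ (p : PairIdx k) (d : Fin 3 →₀ ℕ), d 2 = 0 →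
      MvPowerSeries.coeff d (χ p) =
        if (p.1.1 : ℕ) = 0 ∧ (p.1.2 : ℕ) = 0 ∧ d = 0 then 1 else 0) :
    (∀ (p : PairIdx k) (d : Fin 3 →₀ ℕ),
      ∃ c : ℕ, MvPowerSeries.coeff d (χ p) = (c : ℂ)) ∧
    (∀ (p : PairIdx k) (n : ℕ),
      {d : Fin 3 →₀ ℕ | d 0 = n ∧ MvPowerSeries.coeff d (χ p) ≠ 0}.Finite) :=
  solution_coeff_nonneg_general k χ heq hinit

end DiffEqn
end
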